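/- arXiv:1010.5977 — 3 statements merged into one kernel-verified Lean document; each statement's English description precedes it below -/
import Mathlib

section
/- Let d ≥ 1, n₀ ∈ ℕ, c₀ > 0, and let λ_j, λ_k : ℝ^d → ℝ be smooth, each at most quadratic, with |λ_j(x) − λ_k(x)| ≥ c₀ ⟨x⟩^{−n₀} for all x ∈ ℝ^d. Set γ_{j,k}(x) = (λ_j(x) − λ_k(x))^{−1}. Then for every multi-index β ∈ ℕ^d there exists a constant C = C(β) such that |∂_x^β γ_{j,k}(x)| ≤ C ⟨x⟩^{n₀ + |β|(1+n₀)} for all x ∈ ℝ^d. -/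
/-- The Japanese bracket `⟨x⟩ = (1+|x|²)^{1/2}` on `ℝ^d`. -/
noncomputable def japd {d : ℕ} (x : EuclideanSpace ℝ (Fin d)) : ℝ :=
  Real.sqrt (1 + ‖x‖ ^ 2)

/-- A smooth function on `ℝ^d` is at most quadratic if all its derivatives of
order `≥ 2` are bounded. -/
def AtMostQuadratic {d : ℕ} (f : EuclideanSpace ℝ (Fin d) → ℝ) : Prop :=
  ContDiff ℝ (⊤ : ℕ∞) f ∧ ∀ n : ℕ, 2 ≤ n → ∃ M : ℝ, ∀ x, ‖iteratedFDeriv ℝ n f x‖ ≤ M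

/-- Partial derivative in the `ℓ`-th coordinate direction. -/
noncomputable def pd {d : ℕ} (ℓ : Fin d) (f : EuclideanSpace ℝ (Fin d) → ℝ) :
    EuclideanSpace ℝ (Fin d) → ℝ :=
  fun x => fderiv ℝ f x (EuclideanSpace.single ℓ 1)

/-- Iterated coordinate partial derivative `∂^β` along a list of directions
(a multi-index is encoded by the list of its coordinate directions). -/
noncomputable def pdIter {d : ℕ} (L : List (Fin d)) (f : EuclideanSpace ℝ (Fin d) → ℝ) :
    EuclideanSpace ℝ (Fin d) → ℝ :=
  L.foldr pd f

open scoped ContDiff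

namespace IGDB

variable {d : ℕ}

lemma japd_pos (x : EuclideanSpace ℝ (Fin d)) : 0 < japd x := by
  unfold japd; positivity

lemma one_le_japd (x : EuclideanSpace ℝ (Fin d)) : 1 ≤ japd x := by
  unfold japd
  rw [Real.one_le_sqrt]
  nlinarith [sq_nonneg ‖x‖]

lemma norm_le_japd (x : EuclideanSpace ℝ (Fin d)) : ‖x‖ ≤ japd x := by
  unfold japd
  rw [Real.le_sqrt (norm_nonneg x) (by positivity)]
  nlinarith

lemma contDiff_pd (ℓ : Fin d) {f : EuclideanSpace ℝ (Fin d) → ℝ} (hf : ContDiff ℝ ∞ f) :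
    ContDiff ℝ ∞ (pd ℓ f) := by
  have h1 : ContDiff ℝ ∞ (fderiv ℝ f) := hf.fderiv_right (by simp)
  exact (ContinuousLinearMap.apply ℝ ℝ (EuclideanSpace.single ℓ 1)).contDiff.comp h1

lemma contDiff_pdIter (L : List (Fin d)) {f : EuclideanSpace ℝ (Fin d) → ℝ}
    (hf : ContDiff ℝ ∞ f) : ContDiff ℝ ∞ (pdIter L f) := by
  induction L with
  | nil => exact hf
  | cons ℓ M ih => exact contDiff_pd ℓ ih

lemma pdIter_append (M : List (Fin d)) (ℓ : Fin d) (f : EuclideanSpace ℝ (Fin d) → ℝ) :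
    pdIter (M ++ [ℓ]) f = pdIter M (pd ℓ f) := by
  unfold pdIter; rw [List.foldr_append]; rfl

lemma differentiable_list_sum (fs : List (EuclideanSpace ℝ (Fin d) → ℝ))
    (hfs : ∀ f ∈ fs, Differentiable ℝ f) :
    Differentiable ℝ (fun y => (fs.map (fun f => f y)).sum) := by
  induction fs with
  | nil => simpa using differentiable_const (0:ℝ)
  | cons f t ih =>
    simp only [List.map_cons, List.sum_cons]
    exact (hfs f (by simp)).add (ih (fun g hg => hfs g (by simp [hg])))

lemma pd_list_sum (ℓ : Fin d) (fs : List (EuclideanSpace ℝ (Fin d) → ℝ))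
    (hfs : ∀ f ∈ fs, Differentiable ℝ f) (x : EuclideanSpace ℝ (Fin d)) :
    pd ℓ (fun y => (fs.map (fun f => f y)).sum) x = (fs.map (fun f => pd ℓ f x)).sum := by
  induction fs with
  | nil => simp [pd]
  | cons f t ih =>
    have hf := hfs f (by simp)
    have ht : ∀ g ∈ t, Differentiable ℝ g := fun g hg => hfs g (by simp [hg])
    have hts := differentiable_list_sum t ht
    simp only [List.map_cons, List.sum_cons]
    rw [← ih ht]
    show fderiv ℝ (fun y => f y + (t.map (fun f => f y)).sum) x _ = _
    rw [fderiv_fun_add (hf x) (hts x)]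
    simp [pd]

lemma pdIter_eq {f : EuclideanSpace ℝ (Fin d) → ℝ} (hf : ContDiff ℝ ∞ f)
    (L : List (Fin d)) (x : EuclideanSpace ℝ (Fin d)) :
    pdIter L f x = iteratedFDeriv ℝ L.length f x
      (fun i => EuclideanSpace.single (L.get i) 1) := by
  induction L generalizing x with
  | nil => simp [pdIter]
  | cons ℓ M ih =>
    have hF : ContDiff ℝ ∞ (iteratedFDeriv ℝ M.length f) := hf.iteratedFDeriv_right (by norm_cast)
    set v : Fin M.length → EuclideanSpace ℝ (Fin d) :=
      fun i => EuclideanSpace.single (M.get i) 1 with hv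
    have key : pdIter M f = fun y =>
        (ContinuousMultilinearMap.apply ℝ (fun _ : Fin M.length => EuclideanSpace ℝ (Fin d)) ℝ v)
          (iteratedFDeriv ℝ M.length f y) := funext fun y => ih y
    show pd ℓ (pdIter M f) x = _
    rw [key]
    unfold pd
    have hcomp : HasFDerivAt (fun y =>
        (ContinuousMultilinearMap.apply ℝ (fun _ : Fin M.length => EuclideanSpace ℝ (Fin d)) ℝ v)
          (iteratedFDeriv ℝ M.length f y))
        ((ContinuousMultilinearMap.apply ℝ (fun _ : Fin M.length => EuclideanSpace ℝ (Fin d)) ℝ v).comp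
          (fderiv ℝ (iteratedFDeriv ℝ M.length f) x)) x :=
      (ContinuousLinearMap.hasFDerivAt _).comp x ((hF.differentiable (by simp)) x).hasFDerivAt
    rw [hcomp.fderiv]
    simp only [ContinuousLinearMap.coe_comp', Function.comp_apply,
      ContinuousMultilinearMap.apply_apply]
    have := iteratedFDeriv_succ_apply_left (𝕜 := ℝ) (f := f) (x := x) (n := M.length)
      (Fin.cons (EuclideanSpace.single ℓ 1) v)
    have harg : (fun i : Fin (M.length + 1) => EuclideanSpace.single ((ℓ :: M).get i) (1:ℝ))
        = Fin.cons (EuclideanSpace.single ℓ 1) v := by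
      funext i
      refine Fin.cases ?_ ?_ i
      · rfl
      · intro j; rfl
    show (fderiv ℝ (iteratedFDeriv ℝ M.length f) x) (EuclideanSpace.single ℓ 1) v
        = iteratedFDeriv ℝ (M.length + 1) f x
          (fun i : Fin (M.length + 1) => EuclideanSpace.single ((ℓ :: M).get i) 1)
    rw [harg, this, Fin.cons_zero, Fin.tail_cons]

lemma abs_pdIter_le {f : EuclideanSpace ℝ (Fin d) → ℝ} (hf : ContDiff ℝ ∞ f)
    (L : List (Fin d)) (x : EuclideanSpace ℝ (Fin d)) :
    |pdIter L f x| ≤ ‖iteratedFDeriv ℝ L.length f x‖ := by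
  rw [← Real.norm_eq_abs, pdIter_eq hf L x]
  calc ‖_‖ ≤ ‖iteratedFDeriv ℝ L.length f x‖ * ∏ i : Fin L.length,
        ‖EuclideanSpace.single (L.get i) (1:ℝ)‖ :=
      (iteratedFDeriv ℝ L.length f x).le_opNorm _
    _ = ‖iteratedFDeriv ℝ L.length f x‖ := by
      simp [EuclideanSpace.norm_single]

lemma fderiv_pdIter_apply {f : EuclideanSpace ℝ (Fin d) → ℝ} (hf : ContDiff ℝ ∞ f)
    (L : List (Fin d)) (x v : EuclideanSpace ℝ (Fin d)) :
    fderiv ℝ (pdIter L f) x v = iteratedFDeriv ℝ (L.length + 1) f x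
      (Fin.cons v (fun i => EuclideanSpace.single (L.get i) 1)) := by
  have hF : ContDiff ℝ ∞ (iteratedFDeriv ℝ L.length f) := hf.iteratedFDeriv_right (by norm_cast)
  set w : Fin L.length → EuclideanSpace ℝ (Fin d) :=
    fun i => EuclideanSpace.single (L.get i) 1 with hw
  have key : pdIter L f = fun y =>
      (ContinuousMultilinearMap.apply ℝ (fun _ : Fin L.length => EuclideanSpace ℝ (Fin d)) ℝ w)
        (iteratedFDeriv ℝ L.length f y) := funext fun y => pdIter_eq hf L y
  rw [key]
  have hcomp : HasFDerivAt (fun y =>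
      (ContinuousMultilinearMap.apply ℝ (fun _ : Fin L.length => EuclideanSpace ℝ (Fin d)) ℝ w)
        (iteratedFDeriv ℝ L.length f y))
      ((ContinuousMultilinearMap.apply ℝ (fun _ : Fin L.length => EuclideanSpace ℝ (Fin d)) ℝ w).comp
        (fderiv ℝ (iteratedFDeriv ℝ L.length f) x)) x :=
    (ContinuousLinearMap.hasFDerivAt _).comp x ((hF.differentiable (by simp)) x).hasFDerivAt
  rw [hcomp.fderiv]
  simp only [ContinuousLinearMap.coe_comp', Function.comp_apply,
    ContinuousMultilinearMap.apply_apply]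
  rw [iteratedFDeriv_succ_apply_left, Fin.cons_zero, Fin.tail_cons]
/-- Linear growth of a function with bounded `fderiv`-norm, via mean value. -/
lemma linear_growth {u : EuclideanSpace ℝ (Fin d) → ℝ} (hu : ContDiff ℝ ∞ u)
    {M2 : ℝ} (hM2 : ∀ x, ‖fderiv ℝ u x‖ ≤ M2) :
    ∃ C > 0, ∀ x, |u x| ≤ C * japd x := by
  have hM2' : 0 ≤ M2 := (norm_nonneg _).trans (hM2 0)
  refine ⟨M2 + |u 0| + 1, by positivity, fun x => ?_⟩
  have hmv : ‖u x - u 0‖ ≤ M2 * ‖x - 0‖ :=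
    Convex.norm_image_sub_le_of_norm_fderiv_le
      (fun y _ => (hu.differentiable (by simp)) y)
      (fun y _ => hM2 y) convex_univ (Set.mem_univ 0) (Set.mem_univ x)
  rw [Real.norm_eq_abs, sub_zero] at hmv
  have h1 : |u x| ≤ M2 * ‖x‖ + |u 0| := by
    have := abs_sub_abs_le_abs_sub (u x) (u 0)
    linarith
  have h2 : ‖x‖ ≤ japd x := norm_le_japd x
  have h3 : 1 ≤ japd x := one_le_japd x
  nlinarith [abs_nonneg (u 0), japd_pos x]

/-- All iterated coordinate partials of a first partial of an at-most-quadratic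
function grow at most linearly. -/
lemma fderiv_pdIter_norm_le {f : EuclideanSpace ℝ (Fin d) → ℝ} (hf : ContDiff ℝ ∞ f)
    (L : List (Fin d)) (x v : EuclideanSpace ℝ (Fin d)) :
    ‖fderiv ℝ (pdIter L f) x v‖ ≤ ‖iteratedFDeriv ℝ (L.length + 1) f x‖ * ‖v‖ := by
  rw [fderiv_pdIter_apply hf L x v]
  have hle := (iteratedFDeriv ℝ (L.length + 1) f x).le_opNorm
    (Fin.cons v (fun i => EuclideanSpace.single (L.get i) (1:ℝ)))
  have hprod : (∏ i : Fin (L.length + 1), ‖(Fin.cons v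
      (fun i => EuclideanSpace.single (L.get i) (1:ℝ)) :
        Fin (L.length + 1) → EuclideanSpace ℝ (Fin d)) i‖) = ‖v‖ := by
    rw [Fin.prod_univ_succ]
    simp [Fin.cons_zero, Fin.cons_succ, EuclideanSpace.norm_single]
  rw [hprod] at hle
  exact hle

lemma pd_deriv_growth {g : EuclideanSpace ℝ (Fin d) → ℝ} (hg : ContDiff ℝ ∞ g)
    (hquad : ∀ n : ℕ, 2 ≤ n → ∃ M : ℝ, ∀ x, ‖iteratedFDeriv ℝ n g x‖ ≤ M)
    (ℓ : Fin d) (M : List (Fin d)) :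
    ∃ C > 0, ∀ x, |pdIter M (pd ℓ g) x| ≤ C * japd x := by
  rw [← pdIter_append]
  rcases M with _ | ⟨m, M'⟩
  · -- M = [] : pdIter [ℓ] g = pd ℓ g, linear growth
    obtain ⟨M2, hM2⟩ := hquad 2 le_rfl
    apply linear_growth (contDiff_pdIter [ℓ] hg)
    · intro x
      refine ContinuousLinearMap.opNorm_le_bound _ ((norm_nonneg _).trans (hM2 0)) fun v => ?_
      refine (fderiv_pdIter_norm_le hg [ℓ] x v).trans ?_
      exact mul_le_mul_of_nonneg_right (hM2 x) (norm_nonneg v)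
  · -- order ≥ 2 : bounded
    obtain ⟨Mn, hMn⟩ := hquad ((m :: M' ++ [ℓ]).length) (by simp)
    refine ⟨max Mn 0 + 1, by positivity, fun x => ?_⟩
    have h1 := abs_pdIter_le hg (m :: M' ++ [ℓ]) x
    have h2 := hMn x
    have h3 := one_le_japd x
    have h4 : |pdIter (m :: M' ++ [ℓ]) g x| ≤ max Mn 0 + 1 := by
      refine h1.trans (h2.trans ?_)
      have := le_max_left Mn 0
      linarith
    calc |pdIter (m :: M' ++ [ℓ]) g x| ≤ (max Mn 0 + 1) * 1 := by linarith
      _ ≤ (max Mn 0 + 1) * japd x := by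
          apply mul_le_mul_of_nonneg_left h3 (by positivity)

/-- The list of splittings used in the Leibniz formula. -/
def leib : List (Fin d) → List (List (Fin d) × List (Fin d))
  | [] => [([], [])]
  | ℓ :: M => ((leib M).map fun p => (ℓ :: p.1, p.2)) ++ ((leib M).map fun p => (p.1, ℓ :: p.2))

lemma pdIter_mul {h u : EuclideanSpace ℝ (Fin d) → ℝ} (hh : ContDiff ℝ ∞ h)
    (hu : ContDiff ℝ ∞ u) (M : List (Fin d)) (x : EuclideanSpace ℝ (Fin d)) :
    pdIter M (fun y => h y * u y) x
      = ((leib M).map fun p => pdIter p.1 h x * pdIter p.2 u x).sum := by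
  induction M generalizing x with
  | nil => simp [leib, pdIter]
  | cons ℓ M ih =>
    have key : pdIter M (fun y => h y * u y)
        = fun y => (((leib M).map fun p => fun z => pdIter p.1 h z * pdIter p.2 u z).map
            (fun f => f y)).sum := by
      funext y; rw [ih y, List.map_map]; rfl
    show pd ℓ (pdIter M (fun y => h y * u y)) x = _
    rw [key, pd_list_sum ℓ _ (by
      intro f hf
      simp only [List.mem_map] at hf
      obtain ⟨p, _, rfl⟩ := hf
      exact ((contDiff_pdIter p.1 hh).mul (contDiff_pdIter p.2 hu)).differentiable (by simp))]
    rw [List.map_map]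
    have step : ∀ p : List (Fin d) × List (Fin d),
        pd ℓ (fun z => pdIter p.1 h z * pdIter p.2 u z) x
          = pdIter (ℓ :: p.1) h x * pdIter p.2 u x + pdIter p.1 h x * pdIter (ℓ :: p.2) u x := by
      intro p
      have h1 : DifferentiableAt ℝ (pdIter p.1 h) x :=
        (contDiff_pdIter p.1 hh).differentiable (by simp) x
      have h2 : DifferentiableAt ℝ (pdIter p.2 u) x :=
        (contDiff_pdIter p.2 hu).differentiable (by simp) x
      show fderiv ℝ (fun z => pdIter p.1 h z * pdIter p.2 u z) x _ = _
      rw [fderiv_fun_mul h1 h2]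
      simp only [ContinuousLinearMap.add_apply, ContinuousLinearMap.smul_apply, smul_eq_mul]
      show pdIter p.1 h x * pd ℓ (pdIter p.2 u) x + pdIter p.2 u x * pd ℓ (pdIter p.1 h) x = _
      ring_nf
      rfl
    have hmapeq : (leib M).map ((fun f => pd ℓ f x) ∘ (fun p : List (Fin d) × List (Fin d) =>
          fun z => pdIter p.1 h z * pdIter p.2 u z))
        = (leib M).map (fun p => pdIter (ℓ :: p.1) h x * pdIter p.2 u x
            + pdIter p.1 h x * pdIter (ℓ :: p.2) u x) :=
      List.map_congr_left fun p _ => step p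
    rw [hmapeq]
    show _ = ((leib (ℓ :: M)).map fun p => pdIter p.1 h x * pdIter p.2 u x).sum
    rw [leib, List.map_append, List.sum_append, List.map_map, List.map_map]
    have sum_add : ∀ (l : List (List (Fin d) × List (Fin d)))
        (f g : List (Fin d) × List (Fin d) → ℝ),
        (l.map fun p => f p + g p).sum = (l.map f).sum + (l.map g).sum := by
      intro l f g
      induction l with
      | nil => simp
      | cons a t iht => simp [iht]; ring
    rw [sum_add]
    rfl
lemma pdIter_const (c : ℝ) (M : List (Fin d)) :
    ∃ c' : ℝ, (pdIter M (fun _ => c) = fun _ => c') ∧ |c'| ≤ |c| := by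
  induction M with
  | nil => exact ⟨c, rfl, le_rfl⟩
  | cons ℓ M ih =>
    obtain ⟨c', hc', hle⟩ := ih
    refine ⟨0, ?_, by simpa using abs_nonneg c⟩
    show pd ℓ (pdIter M fun _ => c) = fun _ => (0:ℝ)
    rw [hc']
    funext x
    simp [pd]

/-- Numerators: products of first-or-higher order coordinate partials of `g`. -/
inductive Num {d : ℕ} (g : EuclideanSpace ℝ (Fin d) → ℝ) : ℕ → (EuclideanSpace ℝ (Fin d) → ℝ) → Prop
  | one : Num g 0 (fun _ => 1)
  | pdStep {r : ℕ} {h : EuclideanSpace ℝ (Fin d) → ℝ} (ℓ : Fin d) :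
      Num g r h → Num g r (pd ℓ h)
  | mulg {r : ℕ} {h : EuclideanSpace ℝ (Fin d) → ℝ} (ℓ : Fin d) :
      Num g r h → Num g (r + 1) (fun x => h x * pd ℓ g x)

lemma num_contDiff {g : EuclideanSpace ℝ (Fin d) → ℝ} (hg : ContDiff ℝ ∞ g)
    {r : ℕ} {h : EuclideanSpace ℝ (Fin d) → ℝ} (hn : Num g r h) : ContDiff ℝ ∞ h := by
  induction hn with
  | one => exact contDiff_const
  | pdStep ℓ _ ih => exact contDiff_pd ℓ ih
  | mulg ℓ _ ih => exact ih.mul (contDiff_pd ℓ hg)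

/-- Bound the absolute value of a finite sum of functions each bounded by a
multiple of a fixed nonnegative weight. -/
lemma list_sum_bound (vals : List (EuclideanSpace ℝ (Fin d) → ℝ))
    (φ : EuclideanSpace ℝ (Fin d) → ℝ) (hφ : ∀ x, 0 ≤ φ x)
    (hb : ∀ f ∈ vals, ∃ C > 0, ∀ x, |f x| ≤ C * φ x) :
    ∃ C > 0, ∀ x, |(vals.map (fun f => f x)).sum| ≤ C * φ x := by
  induction vals with
  | nil => exact ⟨1, one_pos, fun x => by simpa using hφ x⟩
  | cons f t ih =>
    obtain ⟨C1, hC1, hf⟩ := hb f (by simp)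
    obtain ⟨C2, hC2, ht⟩ := ih (fun g hg => hb g (by simp [hg]))
    refine ⟨C1 + C2, by positivity, fun x => ?_⟩
    simp only [List.map_cons, List.sum_cons]
    calc |f x + (t.map (fun f => f x)).sum| ≤ |f x| + |(t.map (fun f => f x)).sum| := abs_add_le _ _
      _ ≤ C1 * φ x + C2 * φ x := add_le_add (hf x) (ht x)
      _ = (C1 + C2) * φ x := by ring

lemma num_bound {g : EuclideanSpace ℝ (Fin d) → ℝ} (hg : ContDiff ℝ ∞ g)
    (hquad : ∀ n : ℕ, 2 ≤ n → ∃ M : ℝ, ∀ x, ‖iteratedFDeriv ℝ n g x‖ ≤ M)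
    {r : ℕ} {h : EuclideanSpace ℝ (Fin d) → ℝ} (hn : Num g r h) :
    ∀ M : List (Fin d), ∃ C > 0, ∀ x, |pdIter M h x| ≤ C * japd x ^ r := by
  induction hn with
  | one =>
    intro M
    obtain ⟨c', hc', hle⟩ := pdIter_const (1:ℝ) M
    refine ⟨1, one_pos, fun x => ?_⟩
    rw [hc']
    simpa using hle.trans (by norm_num)
  | pdStep ℓ hnum ih =>
    intro M
    obtain ⟨C, hC, hb⟩ := ih (M ++ [ℓ])
    refine ⟨C, hC, fun x => ?_⟩
    rw [← pdIter_append]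
    exact hb x
  | @mulg r h ℓ hnum ih =>
    intro M
    have hh : ContDiff ℝ ∞ h := num_contDiff hg hnum
    have hu : ContDiff ℝ ∞ (pd ℓ g) := contDiff_pd ℓ hg
    have key : ∀ x, pdIter M (fun x => h x * pd ℓ g x) x
        = (((leib M).map fun p => fun x => pdIter p.1 h x * pdIter p.2 (pd ℓ g) x).map
            (fun f => f x)).sum := by
      intro x
      rw [pdIter_mul hh hu M x, List.map_map]
      rfl
    have hb : ∀ f ∈ ((leib M).map fun p =>
        fun x => pdIter p.1 h x * pdIter p.2 (pd ℓ g) x),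
        ∃ C > 0, ∀ x, |f x| ≤ C * japd x ^ (r + 1) := by
      intro f hf
      simp only [List.mem_map] at hf
      obtain ⟨p, _, rfl⟩ := hf
      obtain ⟨C1, hC1, h1⟩ := ih p.1
      obtain ⟨C2, hC2, h2⟩ := pd_deriv_growth hg hquad ℓ p.2
      refine ⟨C1 * C2, by positivity, fun x => ?_⟩
      rw [abs_mul, pow_succ]
      calc |pdIter p.1 h x| * |pdIter p.2 (pd ℓ g) x|
          ≤ (C1 * japd x ^ r) * (C2 * japd x) := by
            exact mul_le_mul (h1 x) (h2 x) (abs_nonneg _)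
              (mul_nonneg hC1.le (pow_nonneg (japd_pos x).le r))
        _ = C1 * C2 * (japd x ^ r * japd x) := by ring
    obtain ⟨C, hC, hsum⟩ := list_sum_bound _ (fun x => japd x ^ (r + 1))
      (fun x => pow_nonneg (japd_pos x).le _) hb
    refine ⟨C, hC, fun x => ?_⟩
    rw [key x]
    exact hsum x
lemma hasDerivAt_inv_pow_aux (m : ℕ) {t : ℝ} (ht : t ≠ 0) :
    HasDerivAt (fun s : ℝ => s⁻¹ ^ m) (-(m : ℝ) * t⁻¹ ^ (m + 1)) t := by
  have h1 : HasDerivAt (fun s : ℝ => s⁻¹) (-(t ^ 2)⁻¹) t := hasDerivAt_inv ht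
  have h2 := h1.fun_pow m
  refine h2.congr_deriv (Eq.symm ?_)
  rcases m with _ | k
  · simp
  · rw [show (k + 1) - 1 = k from rfl]
    push_cast
    rw [pow_succ, pow_succ, sq, mul_inv]
    ring

/-- A term `c · h · g⁻ᵐ` in the representation of iterated derivatives of `g⁻¹`. -/
structure Tm (d : ℕ) where
  c : ℝ
  r : ℕ
  m : ℕ
  h : EuclideanSpace ℝ (Fin d) → ℝ

noncomputable def Tm.val (g : EuclideanSpace ℝ (Fin d) → ℝ) (t : Tm d) :
    EuclideanSpace ℝ (Fin d) → ℝ :=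
  fun x => t.c * t.h x * (g x)⁻¹ ^ t.m

lemma val_smooth {g : EuclideanSpace ℝ (Fin d) → ℝ} (hg : ContDiff ℝ ∞ g)
    (hg0 : ∀ x, g x ≠ 0) (t : Tm d) (hh : ContDiff ℝ ∞ t.h) :
    ContDiff ℝ ∞ (Tm.val g t) :=
  (contDiff_const.mul hh).mul ((hg.inv hg0).pow t.m)

lemma list_sum_map_add {α : Type*} (l : List α) (f g : α → ℝ) :
    (l.map fun p => f p + g p).sum = (l.map f).sum + (l.map g).sum := by
  induction l with
  | nil => simp
  | cons a t iht => simp [iht]; ring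

lemma pd_val {g : EuclideanSpace ℝ (Fin d) → ℝ} (hg : ContDiff ℝ ∞ g)
    (hg0 : ∀ x, g x ≠ 0) (ℓ : Fin d) (t : Tm d) (hh : ContDiff ℝ ∞ t.h)
    (x : EuclideanSpace ℝ (Fin d)) :
    pd ℓ (Tm.val g t) x
      = Tm.val g ⟨t.c, t.r, t.m, pd ℓ t.h⟩ x
        + Tm.val g ⟨-(t.m : ℝ) * t.c, t.r + 1, t.m + 1, fun y => t.h y * pd ℓ g y⟩ x := by
  have hhx : HasFDerivAt (fun y => t.c * t.h y) (t.c • fderiv ℝ t.h x) x :=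
    ((hh.differentiable (by simp) x).hasFDerivAt).const_mul t.c
  have hgx : HasFDerivAt g (fderiv ℝ g x) x := (hg.differentiable (by simp) x).hasFDerivAt
  have hbx : HasFDerivAt (fun y => (g y)⁻¹ ^ t.m)
      ((-(t.m : ℝ) * (g x)⁻¹ ^ (t.m + 1)) • fderiv ℝ g x) x :=
    (hasDerivAt_inv_pow_aux t.m (hg0 x)).comp_hasFDerivAt x hgx
  have hmul := hhx.fun_mul hbx
  show fderiv ℝ (Tm.val g t) x (EuclideanSpace.single ℓ 1) = _
  rw [show Tm.val g t = fun y => (t.c * t.h y) * ((g y)⁻¹ ^ t.m) from rfl]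
  rw [hmul.fderiv]
  simp only [ContinuousLinearMap.add_apply, ContinuousLinearMap.smul_apply, smul_eq_mul]
  simp only [Tm.val, pd]
  ring

lemma rep {g : EuclideanSpace ℝ (Fin d) → ℝ} (hg : ContDiff ℝ ∞ g)
    (hg0 : ∀ x, g x ≠ 0) (L : List (Fin d)) :
    ∃ Ts : List (Tm d),
      (∀ x, pdIter L (fun y => (g y)⁻¹) x = (Ts.map fun t => Tm.val g t x).sum) ∧
      ∀ t ∈ Ts, Num g t.r t.h ∧ t.r + 1 ≤ t.m ∧ t.m ≤ L.length + 1 := by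
  induction L with
  | nil =>
    refine ⟨[⟨1, 0, 1, fun _ => 1⟩], fun x => ?_, ?_⟩
    · simp [pdIter, Tm.val]
    · intro t ht
      simp only [List.mem_singleton] at ht
      subst ht
      exact ⟨Num.one, le_rfl, by simp⟩
  | cons ℓ L ih =>
    obtain ⟨Ts, hsum, hmem⟩ := ih
    refine ⟨(Ts.map fun t => ⟨t.c, t.r, t.m, pd ℓ t.h⟩)
        ++ (Ts.map fun t =>
            ⟨-(t.m : ℝ) * t.c, t.r + 1, t.m + 1, fun y => t.h y * pd ℓ g y⟩),
      fun x => ?_, ?_⟩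
    · show pd ℓ (pdIter L fun y => (g y)⁻¹) x = _
      have hfun : pdIter L (fun y => (g y)⁻¹)
          = fun y => ((Ts.map (Tm.val g)).map fun f => f y).sum := by
        funext y; rw [hsum y, List.map_map]; rfl
      rw [hfun, pd_list_sum ℓ _ (by
        intro f hf
        simp only [List.mem_map] at hf
        obtain ⟨t, ht, rfl⟩ := hf
        exact (val_smooth hg hg0 t (num_contDiff hg (hmem t ht).1)).differentiable
          (by simp)) x, List.map_map]
      have hcongr : (Ts.map ((fun f => pd ℓ f x) ∘ Tm.val g))
          = Ts.map (fun t => Tm.val g ⟨t.c, t.r, t.m, pd ℓ t.h⟩ x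
              + Tm.val g ⟨-(t.m : ℝ) * t.c, t.r + 1, t.m + 1,
                  fun y => t.h y * pd ℓ g y⟩ x) :=
        List.map_congr_left fun t ht => pd_val hg hg0 ℓ t (num_contDiff hg (hmem t ht).1) x
      rw [hcongr, list_sum_map_add, List.map_append, List.sum_append,
        List.map_map, List.map_map]
      rfl
    · intro t ht
      rw [List.mem_append] at ht
      rcases ht with ht | ht
      · simp only [List.mem_map] at ht
        obtain ⟨s, hs, rfl⟩ := ht
        obtain ⟨hn, h1, h2⟩ := hmem s hs
        refine ⟨Num.pdStep ℓ hn, h1, ?_⟩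
        show s.m ≤ (ℓ :: L).length + 1
        simp only [List.length_cons]
        omega
      · simp only [List.mem_map] at ht
        obtain ⟨s, hs, rfl⟩ := ht
        obtain ⟨hn, h1, h2⟩ := hmem s hs
        refine ⟨Num.mulg ℓ hn, ?_, ?_⟩
        · show s.r + 1 + 1 ≤ s.m + 1
          omega
        · show s.m + 1 ≤ (ℓ :: L).length + 1
          simp only [List.length_cons]
          omega

end IGDB

/-- Lemma C.1: polynomial bounds on all derivatives of the inverse
spectral gap `γ_{j,k} = (λ_j − λ_k)^{−1}`: for every multi-index `β`,
`|∂^β γ_{j,k}(x)| ≤ C ⟨x⟩^{n₀ + |β|(1+n₀)}`. -/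
theorem inverse_gap_derivative_bounds
    (d : ℕ) (hd : 1 ≤ d) (n₀ : ℕ) (c₀ : ℝ) (hc₀ : 0 < c₀)
    (lamj lamk : EuclideanSpace ℝ (Fin d) → ℝ)
    (hj : AtMostQuadratic lamj) (hk : AtMostQuadratic lamk)
    (hgap : ∀ x, c₀ / japd x ^ n₀ ≤ |lamj x - lamk x|) :
    ∀ L : List (Fin d), ∃ C > 0, ∀ x,
      |pdIter L (fun y => (lamj y - lamk y)⁻¹) x|
        ≤ C * japd x ^ (n₀ + L.length * (1 + n₀)) := by
  open IGDB in
  intro L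
  have hgC : ContDiff ℝ ∞ (fun y => lamj y - lamk y) :=
    (hj.1.of_le (by simp)).sub (hk.1.of_le (by simp))
  have hquad : ∀ n : ℕ, 2 ≤ n → ∃ M : ℝ, ∀ x,
      ‖iteratedFDeriv ℝ n (fun y => lamj y - lamk y) x‖ ≤ M := by
    intro n hn
    obtain ⟨Mj, hMj⟩ := hj.2 n hn
    obtain ⟨Mk, hMk⟩ := hk.2 n hn
    refine ⟨Mj + Mk, fun x => ?_⟩
    have hgeq : (fun y => lamj y - lamk y) = lamj + (-lamk) := by
      funext y; simp [sub_eq_add_neg]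
    rw [hgeq, iteratedFDeriv_add_apply (f := lamj) (g := -lamk) (hj.1.of_le (by exact_mod_cast le_top)).contDiffAt
      ((hk.1.of_le (by exact_mod_cast le_top)).neg).contDiffAt, iteratedFDeriv_neg_apply]
    calc ‖iteratedFDeriv ℝ n lamj x + -iteratedFDeriv ℝ n lamk x‖
        ≤ ‖iteratedFDeriv ℝ n lamj x‖ + ‖iteratedFDeriv ℝ n lamk x‖ := by
          simpa using norm_add_le _ (-iteratedFDeriv ℝ n lamk x)
      _ ≤ Mj + Mk := add_le_add (hMj x) (hMk x)
  have hg0 : ∀ x, lamj x - lamk x ≠ 0 := by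
    intro x
    have h1 : 0 < c₀ / japd x ^ n₀ := div_pos hc₀ (pow_pos (japd_pos x) _)
    have := (hgap x)
    intro hz
    rw [hz] at this
    simp at this
    linarith
  have hinv : ∀ x, |lamj x - lamk x|⁻¹ ≤ japd x ^ n₀ / c₀ := by
    intro x
    have h1 : 0 < c₀ / japd x ^ n₀ := div_pos hc₀ (pow_pos (japd_pos x) _)
    have h2 := inv_anti₀ h1 (hgap x)
    rwa [inv_div] at h2
  obtain ⟨Ts, hsum, hmem⟩ := rep (g := fun y => lamj y - lamk y) hgC hg0 L
  have hb : ∀ f ∈ Ts.map (Tm.val (fun y => lamj y - lamk y)),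
      ∃ C > 0, ∀ x, |f x| ≤ C * japd x ^ (n₀ + L.length * (1 + n₀)) := by
    intro f hf
    simp only [List.mem_map] at hf
    obtain ⟨t, ht, rfl⟩ := hf
    obtain ⟨hn, h1, h2⟩ := hmem t ht
    obtain ⟨Ch, hCh, hhb⟩ := num_bound hgC hquad hn []
    refine ⟨(|t.c| + 1) * Ch * (c₀⁻¹) ^ t.m, by positivity, fun x => ?_⟩
    have e1 : |Tm.val (fun y => lamj y - lamk y) t x|
        = |t.c| * |t.h x| * (|lamj x - lamk x|⁻¹) ^ t.m := by
      simp [Tm.val, abs_mul, abs_pow, abs_inv]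
    have e2 : |t.h x| ≤ Ch * japd x ^ t.r := hhb x
    have e3 : (|lamj x - lamk x|⁻¹) ^ t.m ≤ (japd x ^ n₀ / c₀) ^ t.m :=
      pow_le_pow_left₀ (inv_nonneg.mpr (abs_nonneg _)) (hinv x) _
    have hjp := japd_pos x
    have hj1 := one_le_japd x
    have hexp : t.r + n₀ * t.m ≤ n₀ + L.length * (1 + n₀) := by
      have hm : n₀ * t.m ≤ n₀ * (L.length + 1) := Nat.mul_le_mul_left n₀ h2
      have he : n₀ + L.length * (1 + n₀) = L.length + n₀ * (L.length + 1) := by ring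
      rw [he]
      exact Nat.add_le_add (by omega) hm
    calc |Tm.val (fun y => lamj y - lamk y) t x|
        ≤ |t.c| * (Ch * japd x ^ t.r) * ((japd x ^ n₀ / c₀) ^ t.m) := by
          rw [e1]
          apply mul_le_mul
          · exact mul_le_mul_of_nonneg_left e2 (abs_nonneg t.c)
          · exact e3
          · exact pow_nonneg (inv_nonneg.mpr (abs_nonneg _)) _
          · exact mul_nonneg (abs_nonneg _) (mul_nonneg hCh.le (pow_nonneg hjp.le _))
      _ = (|t.c| * Ch * (c₀⁻¹) ^ t.m) * japd x ^ (t.r + n₀ * t.m) := by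
          rw [pow_add, pow_mul, div_pow, div_eq_mul_inv, ← inv_pow]
          ring
      _ ≤ ((|t.c| + 1) * Ch * (c₀⁻¹) ^ t.m) * japd x ^ (n₀ + L.length * (1 + n₀)) := by
          apply mul_le_mul
          · apply mul_le_mul_of_nonneg_right _ (pow_nonneg (inv_nonneg.mpr hc₀.le) _)
            exact mul_le_mul_of_nonneg_right (by linarith) hCh.le
          · exact pow_le_pow_right₀ hj1 hexp
          · exact pow_nonneg hjp.le _
          · positivity
  obtain ⟨C, hC, hfin⟩ := list_sum_bound _ (fun x => japd x ^ (n₀ + L.length * (1 + n₀)))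
    (fun x => pow_nonneg (japd_pos x).le _) hb
  refine ⟨C, hC, fun x => ?_⟩
  have := hfin x
  rw [List.map_map] at this
  rw [hsum x]
  exact this
end

section
/- Let N ≥ 1, let Π : ℝ → M_N(ℂ) be continuously differentiable with Π(w)² = Π(w) for all w, and set K(w) = −i[Π(w), Π′(w)]. Let x : ℝ → ℝ be C¹ and write ξ(t) = x′(t). Fix z ∈ ℝ and let Y : ℝ → ℂ^N be a C¹ solution of i Y′(t) = ξ(t) K(x(t) + z) Y(t). If Π(x(0) + z) Y(0) = Y(0), then Π(x(t) + z) Y(t) = Y(t) for all t ∈ ℝ. -/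
/-!
Differentiating `Π² = Π` gives `Π'Π + ΠΠ' = Π'`, hence `ΠΠ'Π = 0`. With this identity,
`Z = Y - ΠY` (along `w = x(t) + z`) satisfies the linear equation `Z' = -ξ Π' Z`. Since
`Z(0) = 0` and the coefficient is continuous, uniqueness for linear ODEs forces `Z ≡ 0`.
-/

open Set Matrix

theorem IsIdempotentElem.mul_mul_eq_zero_of_mul_add_mul_eq {R : Type*} [NonUnitalRing R] {p q : R}
    (hp : IsIdempotentElem p) (hq : q * p + p * q = q) : p * q * p = 0 := by
  have h := congrArg (p * ·) hq
  simp only [mul_add, ← mul_assoc, hp.eq] at h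
  exact add_eq_right.1 h

section LinearODE

variable {E : Type*} [NormedAddCommGroup E] [NormedSpace ℝ E]

theorem eq_zero_of_hasDerivAt_clm_apply {A : ℝ → E →L[ℝ] E} (hA : Continuous A) {f : ℝ → E}
    {t₀ : ℝ} (hf : ∀ t, HasDerivAt f (A t (f t)) t) (hf₀ : f t₀ = 0) (t : ℝ) : f t = 0 := by
  obtain ⟨a, b, ht, ht₀⟩ : ∃ a b, t ∈ Ioo a b ∧ t₀ ∈ Ioo a b :=
    ⟨min (-|t|) (-|t₀|) - 1, max |t| |t₀| + 1, by grind⟩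
  obtain ⟨K, hK⟩ := (isCompact_Icc (a := a) (b := b)).bddAbove_image
    (continuous_nnnorm.comp hA).continuousOn
  have hlip : ∀ s ∈ Ioo a b, LipschitzOnWith K (A s) univ := fun s hs =>
    ((A s).lipschitz.weaken (hK ⟨s, Ioo_subset_Icc_self hs, rfl⟩)).lipschitzOnWith
  have hzero : ∀ s, HasDerivAt (fun _ => (0 : E)) (A s 0) s := fun s => by
    simpa using hasDerivAt_const s (0 : E)
  exact ODE_solution_unique_of_mem_Ioo (g := fun _ => 0) hlip ht₀
    (fun s _ => ⟨hf s, trivial⟩) (fun s _ => ⟨hzero s, trivial⟩) hf₀ ht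

end LinearODE

theorem Matrix.eq_zero_of_hasDerivAt_mulVec {𝕜 n : Type*} [RCLike 𝕜] [Fintype n]
    {M : ℝ → Matrix n n 𝕜} (hM : Continuous M) {f : ℝ → n → 𝕜} {t₀ : ℝ}
    (hf : ∀ t, HasDerivAt f (M t *ᵥ f t) t) (hf₀ : f t₀ = 0) (t : ℝ) : f t = 0 :=
  eq_zero_of_hasDerivAt_clm_apply
    (A := fun s => ((M s).mulVecLin.restrictScalars ℝ).toContinuousLinearMap)
    (continuous_clm_apply.2 fun _ => hM.matrix_mulVec continuous_const) hf hf₀ t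

section Calculus

variable {𝕜 𝔸 m n : Type*} [NontriviallyNormedField 𝕜] [NormedRing 𝔸] [NormedAlgebra 𝕜 𝔸]
  [Fintype n] {t : 𝕜}

theorem hasDerivAt_matrix_mulVec {A : 𝕜 → Matrix m n 𝔸} {A' : Matrix m n 𝔸} {v : 𝕜 → n → 𝔸}
    {v' : n → 𝔸} (hA : ∀ i j, HasDerivAt (fun s => A s i j) (A' i j) t) (hv : HasDerivAt v v' t) :
    HasDerivAt (fun s => A s *ᵥ v s) (A' *ᵥ v t + A t *ᵥ v') t := by
  refine hasDerivAt_pi.2 fun i => ?_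
  simpa only [Matrix.mulVec, dotProduct, Pi.add_apply, ← Finset.sum_add_distrib] using
    HasDerivAt.fun_sum fun j _ => (hA i j).fun_mul (hasDerivAt_pi.1 hv j)

theorem mul_add_mul_eq_of_hasDerivAt_of_isIdempotentElem {P : 𝕜 → Matrix n n 𝔸}
    {P' : Matrix n n 𝔸} (hP : ∀ s, IsIdempotentElem (P s))
    (hP' : ∀ i j, HasDerivAt (fun s => P s i j) (P' i j) t) :
    P' * P t + P t * P' = P' := by
  refine ext_iff_mulVec.2 fun v => ?_
  have hPv : HasDerivAt (fun s => P s *ᵥ v) (P' *ᵥ v) t := by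
    simpa using hasDerivAt_matrix_mulVec hP' (hasDerivAt_const t v)
  have hPPv := hasDerivAt_matrix_mulVec hP' hPv
  simp only [mulVec_mulVec, (hP _).eq] at hPPv
  rw [add_mulVec]
  exact hPPv.unique hPv

theorem hasDerivAt_sub_mulVec_of_isIdempotentElem {P : 𝕜 → Matrix n n 𝔸} {P' : Matrix n n 𝔸}
    {Y : 𝕜 → n → 𝔸} (hP : ∀ s, IsIdempotentElem (P s))
    (hP' : ∀ i j, HasDerivAt (fun s => P s i j) (P' i j) t)
    (hY : HasDerivAt Y ((P' * P t - P t * P') *ᵥ Y t) t) :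
    HasDerivAt (fun s => Y s - P s *ᵥ Y s) (-P' *ᵥ (Y t - P t *ᵥ Y t)) t := by
  have hPP'P : P t * P' * P t = 0 :=
    (hP t).mul_mul_eq_zero_of_mul_add_mul_eq (mul_add_mul_eq_of_hasDerivAt_of_isIdempotentElem hP hP')
  have hcomm : P t * (P' * P t - P t * P') = -(P t * P') := by
    rw [mul_sub, ← mul_assoc, hPP'P, ← mul_assoc, (hP t).eq, zero_sub]
  refine (hY.sub (hasDerivAt_matrix_mulVec hP' hY)).congr_deriv ?_
  rw [mulVec_mulVec, hcomm]
  simp only [neg_mulVec, mulVec_sub, sub_mulVec, mulVec_mulVec, neg_mul]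
  abel

end Calculus

theorem parallel_transport_preserves_range_general
    (N : ℕ)
    (Pi : ℝ → Matrix (Fin N) (Fin N) ℂ)
    (hPiC1 : ∀ i j : Fin N, ContDiff ℝ 1 fun w => Pi w i j)
    (hproj : ∀ w : ℝ, Pi w * Pi w = Pi w)
    (K : ℝ → Matrix (Fin N) (Fin N) ℂ)
    (hK : ∀ w : ℝ, K w =
      (-Complex.I) •
        (Pi w * (Matrix.of fun i j : Fin N => deriv (fun v => Pi v i j) w)
          - (Matrix.of fun i j : Fin N => deriv (fun v => Pi v i j) w) * Pi w))
    (x : ℝ → ℝ) (hx : ContDiff ℝ 1 x) (ξ : ℝ → ℝ) (hξ : ξ = deriv x)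
    (z : ℝ)
    (Y : ℝ → (Fin N → ℂ))
    (hY : ∀ t : ℝ, HasDerivAt Y ((-Complex.I) • (ξ t • (K (x t + z)).mulVec (Y t))) t)
    (hY0 : (Pi (x 0 + z)).mulVec (Y 0) = Y 0) :
    ∀ t : ℝ, (Pi (x t + z)).mulVec (Y t) = Y t := by
  subst hξ
  set D : ℝ → Matrix (Fin N) (Fin N) ℂ := fun w => of fun i j => deriv (fun v => Pi v i j) w
  set P : ℝ → Matrix (Fin N) (Fin N) ℂ := fun t => Pi (x t + z)
  set A : ℝ → Matrix (Fin N) (Fin N) ℂ := fun t => deriv x t • D (x t + z)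
  have hPA : ∀ t i j, HasDerivAt (fun s => P s i j) (A t i j) t := fun t i j =>
    ((hPiC1 i j).differentiable one_ne_zero _).hasDerivAt.scomp t
      ((hx.differentiable one_ne_zero t).hasDerivAt.add_const z)
  have hYA : ∀ t, HasDerivAt Y ((A t * P t - P t * A t) *ᵥ Y t) t := fun t => by
    refine (hY t).congr_deriv ?_
    -- `(-i) • (-i) = -1` turns `-i[Π, Π']` into the commutator `[Π', Π]`
    rw [hK, smul_mulVec, smul_comm (deriv x t) (-Complex.I), smul_smul, neg_mul_neg,
      Complex.I_mul_I, neg_smul, one_smul]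
    simp only [A, P, D, smul_mul, Matrix.mul_smul, sub_mulVec, smul_mulVec, smul_sub, neg_sub]
  have hA : Continuous A := continuous_pi fun i => continuous_pi fun j =>
    (hx.continuous_deriv le_rfl).smul
      (((hPiC1 i j).continuous_deriv le_rfl).comp (hx.continuous.add continuous_const))
  intro t
  have hZ := Matrix.eq_zero_of_hasDerivAt_mulVec hA.neg
    (fun s => hasDerivAt_sub_mulVec_of_isIdempotentElem (fun _ => hproj _) (hPA s) (hYA s))
    (sub_eq_zero.2 hY0.symm) t
  exact (sub_eq_zero.1 hZ).symm

/-- parallel transport stays in the range of the projector.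
If `Π : ℝ → M_N(ℂ)` is C¹ with `Π² = Π`, `K(w) = −i[Π(w), Π'(w)]` (entrywise
derivative), `ξ = x'`, and `Y` solves `iY'(t) = ξ(t) K(x(t)+z) Y(t)` with
`Π(x(0)+z)Y(0) = Y(0)`, then `Π(x(t)+z)Y(t) = Y(t)` for all `t`. -/
theorem parallel_transport_preserves_range
    (N : ℕ) (hN : 1 ≤ N)
    (Pi : ℝ → Matrix (Fin N) (Fin N) ℂ)
    (hPiC1 : ∀ i j : Fin N, ContDiff ℝ 1 fun w => Pi w i j)
    (hproj : ∀ w : ℝ, Pi w * Pi w = Pi w)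
    (K : ℝ → Matrix (Fin N) (Fin N) ℂ)
    (hK : ∀ w : ℝ, K w =
      (-Complex.I) •
        (Pi w * (Matrix.of fun i j : Fin N => deriv (fun v => Pi v i j) w)
          - (Matrix.of fun i j : Fin N => deriv (fun v => Pi v i j) w) * Pi w))
    (x : ℝ → ℝ) (hx : ContDiff ℝ 1 x) (ξ : ℝ → ℝ) (hξ : ξ = deriv x)
    (z : ℝ)
    (Y : ℝ → (Fin N → ℂ))
    (hY : ∀ t : ℝ, HasDerivAt Y ((-Complex.I) • (ξ t • (K (x t + z)).mulVec (Y t))) t)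
    (hY0 : (Pi (x 0 + z)).mulVec (Y 0) = Y 0) :
    ∀ t : ℝ, (Pi (x t + z)).mulVec (Y t) = Y t :=
  parallel_transport_preserves_range_general N Pi hPiC1 hproj K hK x hx ξ hξ z Y hY hY0
end

section
/- Let N ≥ 1 and let Π : ℝ → M_N(ℂ) be continuously differentiable with Π(x)² = Π(x) and Π(x) Hermitian for every x. Let ξ : ℝ → ℝ, and let χ, χ̃ : ℝ × ℝ → ℂ^N be C¹ maps such that Π(x)χ(t,x) = χ(t,x) and Π(x)χ̃(t,x) = χ̃(t,x) for all (t,x), and such that χ satisfies the transport equation ∂_tχ(t,x) + ξ(t) ∂_xχ(t,x) = −ξ(t) [Π(x), Π′(x)] χ(t,x). Then for all (t,x): ⟨χ̃(t,x), ∂_tχ(t,x) + ξ(t) ∂_xχ(t,x)⟩_{ℂ^N} = 0. -/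
open scoped InnerProductSpace

theorem IsIdempotentElem.mul_commutator_mul_self_eq_zero {R : Type*} [NonUnitalRing R] {p : R}
    (hp : IsIdempotentElem p) (q : R) : p * (p * q - q * p) * p = 0 := by
  rw [mul_sub, sub_mul, hp.mul_self_mul, ← mul_assoc p q p, hp.mul_mul_self, sub_self]

theorem LinearMap.IsSymmetric.inner_map_eq_inner_conj {𝕜 E : Type*} [RCLike 𝕜]
    [NormedAddCommGroup E] [InnerProductSpace 𝕜 E] {P : E →ₗ[𝕜] E} (hP : P.IsSymmetric)
    (T : E →ₗ[𝕜] E) {v w : E} (hv : P v = v) (hw : P w = w) :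
    ⟪v, T w⟫_𝕜 = ⟪v, (P ∘ₗ T ∘ₗ P) w⟫_𝕜 := by
  rw [LinearMap.comp_apply, LinearMap.comp_apply, ← hP, hv, hw]

theorem Matrix.IsHermitian.inner_toEuclideanLin_commutator_eq_zero {𝕜 n : Type*} [RCLike 𝕜]
    [Fintype n] [DecidableEq n] {A : Matrix n n 𝕜} (hA : A.IsHermitian) (hAA : IsIdempotentElem A)
    (B : Matrix n n 𝕜) {v w : EuclideanSpace 𝕜 n} (hv : A.toEuclideanLin v = v)
    (hw : A.toEuclideanLin w = w) :
    ⟪v, (A * B - B * A).toEuclideanLin w⟫_𝕜 = 0 := by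
  rw [(Matrix.isSymmetric_toEuclideanLin_iff.mpr hA).inner_map_eq_inner_conj _ hv hw,
    ← Matrix.toLpLin_mul_same, ← Matrix.toLpLin_mul_same, ← mul_assoc,
    hAA.mul_commutator_mul_self_eq_zero, map_zero, LinearMap.zero_apply, inner_zero_right]

theorem parallel_transport_orthogonality_general
    (N : ℕ)
    (Pi : ℝ → Matrix (Fin N) (Fin N) ℂ)
    (hproj : ∀ w : ℝ, Pi w * Pi w = Pi w)
    (hherm : ∀ w : ℝ, (Pi w).IsHermitian)
    (ξ : ℝ → ℝ)
    (χ χt : ℝ → ℝ → EuclideanSpace ℂ (Fin N))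
    (hχrange : ∀ t x : ℝ, Matrix.toEuclideanLin (Pi x) (χ t x) = χ t x)
    (hχtrange : ∀ t x : ℝ, Matrix.toEuclideanLin (Pi x) (χt t x) = χt t x)
    (htransport : ∀ t x : ℝ,
      deriv (fun s => χ s x) t + ξ t • deriv (fun y => χ t y) x
        = -(ξ t) • Matrix.toEuclideanLin
            (Pi x * (Matrix.of fun i j : Fin N => deriv (fun v => Pi v i j) x)
              - (Matrix.of fun i j : Fin N => deriv (fun v => Pi v i j) x) * Pi x)
            (χ t x)) :
    ∀ t x : ℝ,
      (inner ℂ (χt t x) (deriv (fun s => χ s x) t + ξ t • deriv (fun y => χ t y) x) : ℂ) = 0 := by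
  intro t x
  rw [htransport t x, inner_smul_right_eq_smul,
    (hherm x).inner_toEuclideanLin_commutator_eq_zero (hproj x) _ (hχtrange t x) (hχrange t x),
    smul_zero]

/-- the parallel-transport orthogonality relation (eq:eigenvector).
If `χ, χ̃` are sections of the range of the C¹ orthogonal projector family `Π`,
and `χ` satisfies `∂_tχ + ξ(t)∂_xχ = −ξ(t)[Π(x), Π'(x)]χ`, then
`⟨χ̃, ∂_tχ + ξ(t)∂_xχ⟩ = 0` pointwise. -/
theorem parallel_transport_orthogonality
    (N : ℕ) (hN : 1 ≤ N)
    (Pi : ℝ → Matrix (Fin N) (Fin N) ℂ)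
    (hPiC1 : ∀ i j : Fin N, ContDiff ℝ 1 fun w => Pi w i j)
    (hproj : ∀ w : ℝ, Pi w * Pi w = Pi w)
    (hherm : ∀ w : ℝ, (Pi w).IsHermitian)
    (ξ : ℝ → ℝ)
    (χ χt : ℝ → ℝ → EuclideanSpace ℂ (Fin N))
    (hχC1 : ContDiff ℝ 1 fun p : ℝ × ℝ => χ p.1 p.2)
    (hχtC1 : ContDiff ℝ 1 fun p : ℝ × ℝ => χt p.1 p.2)
    (hχrange : ∀ t x : ℝ, Matrix.toEuclideanLin (Pi x) (χ t x) = χ t x)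
    (hχtrange : ∀ t x : ℝ, Matrix.toEuclideanLin (Pi x) (χt t x) = χt t x)
    (htransport : ∀ t x : ℝ,
      deriv (fun s => χ s x) t + ξ t • deriv (fun y => χ t y) x
        = -(ξ t) • Matrix.toEuclideanLin
            (Pi x * (Matrix.of fun i j : Fin N => deriv (fun v => Pi v i j) x)
              - (Matrix.of fun i j : Fin N => deriv (fun v => Pi v i j) x) * Pi x)
            (χ t x)) :
    ∀ t x : ℝ,
      (inner ℂ (χt t x) (deriv (fun s => χ s x) t + ξ t • deriv (fun y => χ t y) x) : ℂ) = 0 :=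
  parallel_transport_orthogonality_general N Pi hproj hherm ξ χ χt hχrange hχtrange htransport
end
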